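/- Let X be a complete metric space such that every pair of points x, y ∈ X admits a midpoint z with dist(x,z) = dist(y,z) = dist(x,y)/2. Then X is a geodesic space: any two points are joined by a globally isometric path. -/

import Mathlib

open Set

section Aux

variable {X : Type*} [MetricSpace X]

/-- choose a midpoint -/
noncomputable def midFn (hmid : ∀ x y : X, ∃ z : X,
    dist x z = dist x y / 2 ∧ dist y z = dist x y / 2) (a b : X) : X :=
  (hmid a b).choose

lemma midFn_dist_left (hmid : ∀ x y : X, ∃ z : X,
    dist x z = dist x y / 2 ∧ dist y z = dist x y / 2) (a b : X) :
    dist a (midFn hmid a b) = dist a b / 2 := (hmid a b).choose_spec.1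

lemma midFn_dist_right (hmid : ∀ x y : X, ∃ z : X,
    dist x z = dist x y / 2 ∧ dist y z = dist x y / 2) (a b : X) :
    dist b (midFn hmid a b) = dist a b / 2 := (hmid a b).choose_spec.2

/-- dyadic points: `dyad hmid x y n k` is meant to be the point at parameter `k/2^n`. -/
noncomputable def dyad (hmid : ∀ x y : X, ∃ z : X,
    dist x z = dist x y / 2 ∧ dist y z = dist x y / 2) (x y : X) : ℕ → ℕ → X
  | 0, k => if k = 0 then x else y
  | n+1, k =>
      if k % 2 = 0 then dyad hmid x y n (k / 2)
      else midFn hmid (dyad hmid x y n (k / 2)) (dyad hmid x y n (k / 2 + 1))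

variable (hmid : ∀ x y : X, ∃ z : X,
    dist x z = dist x y / 2 ∧ dist y z = dist x y / 2) (x y : X)

lemma dyad_zero (n : ℕ) : dyad hmid x y n 0 = x := by
  induction n with
  | zero => simp [dyad]
  | succ n ih => simp [dyad, ih]

lemma dyad_top (n : ℕ) : dyad hmid x y n (2 ^ n) = y := by
  induction n with
  | zero => simp [dyad]
  | succ n ih =>
      have h2 : 2 ^ (n + 1) % 2 = 0 := by
        simp [pow_succ, Nat.mul_mod_left]
      have h3 : 2 ^ (n + 1) / 2 = 2 ^ n := by
        rw [pow_succ, Nat.mul_div_cancel] <;> norm_num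
      simp [dyad, h2, h3, ih]

lemma dyad_even (n k : ℕ) : dyad hmid x y (n + 1) (2 * k) = dyad hmid x y n k := by
  have : (2 * k) % 2 = 0 := Nat.mul_mod_right 2 k
  simp [dyad, this, Nat.mul_div_cancel_left k (by norm_num : 0 < 2)]

lemma dyad_step (n : ℕ) : ∀ k < 2 ^ n,
    dist (dyad hmid x y n k) (dyad hmid x y n (k + 1)) = dist x y / 2 ^ n := by
  induction n with
  | zero =>
      intro k hk
      interval_cases k
      simp [dyad]
  | succ n ih =>
      intro k hk
      rcases Nat.even_or_odd k with ⟨j, hj⟩ | ⟨j, hj⟩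
      · subst hj
        have hj2 : j < 2 ^ n := by
          rw [pow_succ] at hk; omega
        have he : (j + j) % 2 = 0 := by omega
        have ho : (j + j + 1) % 2 = 1 := by omega
        have hd1 : (j + j) / 2 = j := by omega
        have hd2 : (j + j + 1) / 2 = j := by omega
        rw [dyad, dyad]
        simp only [he, ho, hd1, hd2]
        norm_num
        rw [midFn_dist_left, ih j hj2]
        ring
      · subst hj
        have hj2 : j < 2 ^ n := by
          rw [pow_succ] at hk; omega
        have ho : (2 * j + 1) % 2 = 1 := by omega
        have he : (2 * j + 1 + 1) % 2 = 0 := by omega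
        have hd1 : (2 * j + 1) / 2 = j := by omega
        have hd2 : (2 * j + 1 + 1) / 2 = j + 1 := by omega
        rw [dyad, dyad]
        simp only [he, ho, hd1, hd2]
        norm_num
        rw [dist_comm, midFn_dist_right, ih j hj2]
        ring
end Aux
section Aux2
variable {X : Type*} [MetricSpace X]
variable (hmid : ∀ x y : X, ∃ z : X,
    dist x z = dist x y / 2 ∧ dist y z = dist x y / 2) (x y : X)

lemma dyad_le (n : ℕ) : ∀ m j, j + m ≤ 2 ^ n →
    dist (dyad hmid x y n j) (dyad hmid x y n (j + m)) ≤ m * (dist x y / 2 ^ n) := by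
  intro m
  induction m with
  | zero => intro j _; simp
  | succ m ih =>
      intro j hj
      calc dist (dyad hmid x y n j) (dyad hmid x y n (j + (m + 1)))
          ≤ dist (dyad hmid x y n j) (dyad hmid x y n (j + m)) +
            dist (dyad hmid x y n (j + m)) (dyad hmid x y n (j + m + 1)) :=
            dist_triangle _ _ _
        _ ≤ m * (dist x y / 2 ^ n) + dist x y / 2 ^ n := by
            gcongr
            · exact ih j (by omega)
            · exact le_of_eq (dyad_step hmid x y n (j + m) (by omega))
        _ = (m + 1 : ℕ) * (dist x y / 2 ^ n) := by push_cast; ring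

lemma dyad_eq (n m j : ℕ) (hj : j + m ≤ 2 ^ n) :
    dist (dyad hmid x y n j) (dyad hmid x y n (j + m)) = m * (dist x y / 2 ^ n) := by
  refine le_antisymm (dyad_le hmid x y n m j hj) ?_
  set r : ℕ := 2 ^ n - (j + m) with hr
  have h1 : dist x y ≤ dist (dyad hmid x y n 0) (dyad hmid x y n j) +
      dist (dyad hmid x y n j) (dyad hmid x y n (j + m)) +
      dist (dyad hmid x y n (j + m)) (dyad hmid x y n (j + m + r)) := by
    have e0 : dyad hmid x y n 0 = x := dyad_zero hmid x y n
    have e1 : dyad hmid x y n (j + m + r) = y := by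
      have : j + m + r = 2 ^ n := by omega
      rw [this]; exact dyad_top hmid x y n
    calc dist x y = dist (dyad hmid x y n 0) (dyad hmid x y n (j + m + r)) := by
          rw [e0, e1]
      _ ≤ _ := dist_triangle4 _ _ _ _
  have h2 : dist (dyad hmid x y n 0) (dyad hmid x y n j) ≤ j * (dist x y / 2 ^ n) := by
    have := dyad_le hmid x y n j 0 (by omega)
    simpa using this
  have h3 : dist (dyad hmid x y n (j + m)) (dyad hmid x y n (j + m + r)) ≤
      r * (dist x y / 2 ^ n) := dyad_le hmid x y n r (j + m) (by omega)
  have hnat : j + m + r = 2 ^ n := by omega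
  have hsum : (j : ℝ) + m + r = 2 ^ n := by
    have := congrArg (fun a : ℕ => (a : ℝ)) hnat
    push_cast at this; linarith
  have hq : ((j : ℝ) + m + r) * (dist x y / 2 ^ n) = dist x y := by
    rw [hsum]; field_simp
  linarith [h1, h2, h3, hq]
end Aux2

/-- A complete metric space in which every pair of points has a midpoint is geodesic. -/
theorem stmt_2 {X : Type*} [MetricSpace X] [CompleteSpace X]
    (hmid : ∀ x y : X, ∃ z : X,
      dist x z = dist x y / 2 ∧ dist y z = dist x y / 2) :
    ∀ x y : X, ∃ γ : ℝ → X, γ 0 = x ∧ γ (dist x y) = y ∧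
      ∀ s ∈ Icc (0:ℝ) (dist x y), ∀ t ∈ Icc (0:ℝ) (dist x y),
        dist (γ s) (γ t) = |s - t| := by
  intro x y
  have hne : Nonempty X := ⟨x⟩
  set d := dist x y with hd
  by_cases hd0 : d = 0
  · refine ⟨fun _ => x, rfl, ?_, ?_⟩
    · have : x = y := by rw [← dist_eq_zero, ← hd]; exact hd0
      exact this.symm ▸ rfl
    · intro s hs t ht
      rw [hd0] at hs ht
      have hs0 : s = 0 := le_antisymm hs.2 hs.1
      have ht0 : t = 0 := le_antisymm ht.2 ht.1
      simp [hs0, ht0]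
  have hdpos : 0 < d := lt_of_le_of_ne dist_nonneg (Ne.symm hd0)
  set k : ℝ → ℕ → ℕ := fun t n => ⌊t * 2 ^ n / d⌋₊ with hk
  set F : ℝ → ℕ → X := fun t n => dyad hmid x y n (k t n) with hF
  -- bound on k
  have hk_le : ∀ t ∈ Icc (0:ℝ) d, ∀ n, k t n ≤ 2 ^ n := by
    intro t ht n
    have h1 : t * 2 ^ n / d ≤ ((2 ^ n : ℕ) : ℝ) := by
      push_cast
      rw [div_le_iff₀ hdpos]
      have : t * 2 ^ n ≤ d * 2 ^ n := by
        have : (0:ℝ) < 2 ^ n := by positivity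
        nlinarith [ht.2]
      linarith
    calc k t n ≤ ⌊((2 ^ n : ℕ) : ℝ)⌋₊ := Nat.floor_mono h1
      _ = 2 ^ n := Nat.floor_natCast _
  -- doubling property of k
  have hk_double : ∀ t ∈ Icc (0:ℝ) d, ∀ n,
      2 * k t n ≤ k t (n + 1) ∧ k t (n + 1) ≤ 2 * k t n + 1 := by
    intro t ht n
    have hu0 : 0 ≤ t * 2 ^ n / d := by
      have := ht.1
      positivity
    have heq : t * 2 ^ (n + 1) / d = 2 * (t * 2 ^ n / d) := by ring
    simp only [hk, heq]
    constructor
    · refine Nat.le_floor ?_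
      push_cast
      have := Nat.floor_le hu0
      linarith
    · have h2 : 2 * (t * 2 ^ n / d) < ((2 * ⌊t * 2 ^ n / d⌋₊ + 1 + 1 : ℕ) : ℝ) := by
        push_cast
        have := Nat.lt_floor_add_one (t * 2 ^ n / d)
        linarith
      have h3 := (Nat.floor_lt (by linarith : (0:ℝ) ≤ 2 * (t * 2 ^ n / d))).2 h2
      omega
  have hd1 : (0:ℝ) ≤ d := le_of_lt hdpos
  -- consecutive distance bound
  have hstep : ∀ t ∈ Icc (0:ℝ) d, ∀ n, dist (F t n) (F t (n + 1)) ≤ (d / 2) * (1 / 2) ^ n := by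
    intro t ht n
    obtain ⟨hlo, hhi⟩ := hk_double t ht n
    have hle : k t (n + 1) ≤ 2 ^ (n + 1) := hk_le t ht (n + 1)
    have hFeq : F t n = dyad hmid x y (n + 1) (2 * k t n) := by
      rw [hF]; exact (dyad_even hmid x y n (k t n)).symm
    set m := k t (n + 1) - 2 * k t n with hm
    have hm1 : m ≤ 1 := by omega
    have h2 : 2 * k t n + m = k t (n + 1) := by omega
    have hb := dyad_le hmid x y (n + 1) m (2 * k t n) (by omega)
    rw [h2] at hb
    have hcast : (m : ℝ) ≤ 1 := by exact_mod_cast hm1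
    have heq : (d / 2) * (1 / 2 : ℝ) ^ n = d / 2 ^ (n + 1) := by
      rw [div_pow, one_pow, pow_succ]; ring
    calc dist (F t n) (F t (n + 1))
        = dist (dyad hmid x y (n + 1) (2 * k t n)) (dyad hmid x y (n + 1) (k t (n + 1))) := by
          rw [hFeq]
      _ ≤ m * (dist x y / 2 ^ (n + 1)) := hb
      _ ≤ 1 * (d / 2 ^ (n + 1)) := by
          rw [← hd]
          have hpos : (0:ℝ) ≤ d / 2 ^ (n + 1) := by positivity
          exact mul_le_mul_of_nonneg_right hcast hpos
      _ = (d / 2) * (1 / 2) ^ n := by rw [one_mul, heq]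
  have hcauchy : ∀ t ∈ Icc (0:ℝ) d, CauchySeq (F t) := fun t ht =>
    cauchySeq_of_le_geometric (1 / 2) (d / 2) (by norm_num) (hstep t ht)
  set γ : ℝ → X := fun t => Filter.limUnder Filter.atTop (F t) with hγ
  have hconv : ∀ t ∈ Icc (0:ℝ) d, Filter.Tendsto (F t) Filter.atTop (nhds (γ t)) :=
    fun t ht => (hcauchy t ht).tendsto_limUnder
  -- convergence of dyadic parameters
  have hklim : ∀ t ∈ Icc (0:ℝ) d, Filter.Tendsto
      (fun n => (k t n : ℝ) * (d / 2 ^ n)) Filter.atTop (nhds t) := by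
    intro t ht
    have hz : Filter.Tendsto (fun n : ℕ => t - d * (1 / 2 : ℝ) ^ n) Filter.atTop (nhds t) := by
      have h0 : Filter.Tendsto (fun n : ℕ => d * (1 / 2 : ℝ) ^ n) Filter.atTop (nhds 0) := by
        have := tendsto_pow_atTop_nhds_zero_of_lt_one (by norm_num : (0:ℝ) ≤ 1 / 2)
          (by norm_num : (1:ℝ) / 2 < 1)
        simpa using this.const_mul d
      simpa using tendsto_const_nhds.sub h0
    refine tendsto_of_tendsto_of_tendsto_of_le_of_le hz tendsto_const_nhds ?_ ?_
    · intro n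
      have hfl := Nat.lt_floor_add_one (t * 2 ^ n / d)
      have hp : (0:ℝ) < 2 ^ n := by positivity
      have : t * 2 ^ n / d * (d / 2 ^ n) = t := by field_simp
      have h2 : t < ((k t n : ℝ) + 1) * (d / 2 ^ n) := by
        calc t = t * 2 ^ n / d * (d / 2 ^ n) := this.symm
          _ < ((k t n : ℝ) + 1) * (d / 2 ^ n) := by
              apply mul_lt_mul_of_pos_right _ (by positivity)
              exact hfl
      have heq : (d / 2) * (1 / 2 : ℝ) ^ n = d / 2 ^ n / 2 := by
        rw [div_pow, one_pow]; ring
      have h3 : d * (1 / 2 : ℝ) ^ n = d / 2 ^ n := by rw [div_pow, one_pow]; ring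
      show t - d * (1 / 2 : ℝ) ^ n ≤ (k t n : ℝ) * (d / 2 ^ n)
      rw [h3]
      nlinarith [h2]
    · intro n
      have hnn : (0:ℝ) ≤ t * 2 ^ n / d :=
        div_nonneg (mul_nonneg ht.1 (by positivity)) hd1
      have hfl := Nat.floor_le hnn
      have hp : (0:ℝ) < 2 ^ n := by positivity
      have hteq : t * 2 ^ n / d * (d / 2 ^ n) = t := by field_simp
      show (k t n : ℝ) * (d / 2 ^ n) ≤ t
      calc (k t n : ℝ) * (d / 2 ^ n) ≤ t * 2 ^ n / d * (d / 2 ^ n) := by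
            apply mul_le_mul_of_nonneg_right hfl (by positivity)
        _ = t := hteq
  -- main distance formula for s ≤ t
  have main : ∀ s ∈ Icc (0:ℝ) d, ∀ t ∈ Icc (0:ℝ) d, s ≤ t →
      dist (γ s) (γ t) = t - s := by
    intro s hs t ht hst
    have hkm : ∀ n, k s n ≤ k t n := by
      intro n
      apply Nat.floor_mono
      have hp : (0:ℝ) < 2 ^ n := by positivity
      gcongr
    have hdist : ∀ n, dist (F s n) (F t n) =
        (k t n : ℝ) * (d / 2 ^ n) - (k s n : ℝ) * (d / 2 ^ n) := by
      intro n
      have h1 := dyad_eq hmid x y n (k t n - k s n) (k s n)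
        (by have := hk_le t ht n; have := hkm n; omega)
      have h2 : k s n + (k t n - k s n) = k t n := by have := hkm n; omega
      rw [h2] at h1
      have : F s n = dyad hmid x y n (k s n) := rfl
      rw [hF]
      rw [h1, ← hd, Nat.cast_sub (hkm n)]
      ring
    have hT : Filter.Tendsto (fun n => dist (F s n) (F t n)) Filter.atTop (nhds (t - s)) := by
      have := (hklim t ht).sub (hklim s hs)
      exact this.congr fun n => (hdist n).symm
    have hT2 : Filter.Tendsto (fun n => dist (F s n) (F t n)) Filter.atTop
        (nhds (dist (γ s) (γ t))) := (hconv s hs).dist (hconv t ht)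
    exact tendsto_nhds_unique hT2 hT
  refine ⟨γ, ?_, ?_, ?_⟩
  · have h0 : ∀ n, F 0 n = x := by
      intro n
      have : k 0 n = 0 := by simp [hk]
      rw [hF]; simp only [this]
      exact dyad_zero hmid x y n
    have hx : Filter.Tendsto (F 0) Filter.atTop (nhds x) := by
      rw [funext h0]; exact tendsto_const_nhds
    exact tendsto_nhds_unique (hconv 0 ⟨le_refl 0, hd1⟩) hx
  · have h0 : ∀ n, F d n = y := by
      intro n
      have hkd : k d n = 2 ^ n := by
        have h1 : d * 2 ^ n / d = ((2 ^ n : ℕ) : ℝ) := by push_cast; field_simp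
        simp only [hk]
        rw [h1, Nat.floor_natCast]
      rw [hF]; simp only [hkd]
      exact dyad_top hmid x y n
    have hy : Filter.Tendsto (F d) Filter.atTop (nhds y) := by
      rw [funext h0]; exact tendsto_const_nhds
    exact tendsto_nhds_unique (hconv d ⟨hd1, le_refl d⟩) hy
  · intro s hs t ht
    rcases le_total s t with h | h
    · rw [main s hs t ht h, abs_of_nonpos (by linarith)]; ring
    · rw [dist_comm, main t ht s hs h, abs_of_nonneg (by linarith)]
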